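/- arXiv:2412.19027 — 7 statements merged into one kernel-verified Lean document; each statement's English description precedes it below -/
import Mathlib

section
/- A strong dual infeasibility certificate certifies infeasibility of the dual: let P be a symmetric n×n real matrix, A an m×n real matrix, q ∈ ℝⁿ, and K ⊆ ℝᵐ. If x ∈ ℝⁿ satisfies Px = 0, −Ax ∈ K, and ⟨q, x⟩ < 0, then there exist no x̂ ∈ ℝⁿ and z ∈ ℝᵐ with P x̂ + Aᵀz = −q and z ∈ K*. -/
open Matrix

/-- A strong dual infeasibility certificate certifies infeasibility of the dual. -/
theorem dual_infeasibility_certificate {n m : ℕ}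
    (P : Matrix (Fin n) (Fin n) ℝ) (hP : P.IsSymm)
    (A : Matrix (Fin m) (Fin n) ℝ) (q : Fin n → ℝ) (K : Set (Fin m → ℝ))
    (x : Fin n → ℝ)
    (hPx : P *ᵥ x = 0)
    (hAx : -(A *ᵥ x) ∈ K)
    (hqx : q ⬝ᵥ x < 0) :
    ¬ ∃ (xhat : Fin n → ℝ) (z : Fin m → ℝ),
        P *ᵥ xhat + Aᵀ *ᵥ z = -q ∧ (∀ s ∈ K, 0 ≤ z ⬝ᵥ s) := by
  rintro ⟨xhat, z, heq, hz⟩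
  have h1 : (P *ᵥ xhat + Aᵀ *ᵥ z) ⬝ᵥ x = -q ⬝ᵥ x := by rw [heq]
  have h2 : (P *ᵥ xhat) ⬝ᵥ x = 0 := by
    rw [dotProduct_comm, dotProduct_mulVec,
      show x ᵥ* P = P *ᵥ x from by rw [← hP.eq, mulVec_transpose, hP.eq],
      hPx, zero_dotProduct]
  have h3 : (Aᵀ *ᵥ z) ⬝ᵥ x = z ⬝ᵥ (A *ᵥ x) := by
    rw [mulVec_transpose, ← dotProduct_mulVec]
  have h4 : 0 ≤ z ⬝ᵥ -(A *ᵥ x) := hz _ hAx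
  rw [add_dotProduct, h2, h3, zero_add, neg_dotProduct] at h1
  rw [dotProduct_neg] at h4
  linarith
end

section
/- Recovery of a primal optimal solution from the homogeneous embedding: let P be a symmetric positive semidefinite n×n real matrix, A ∈ ℝᵐˣⁿ, q ∈ ℝⁿ, b ∈ ℝᵐ, and let K be a convex cone in ℝᵐ (closed under multiplication by positive scalars). Suppose x ∈ ℝⁿ, z, s ∈ ℝᵐ, τ > 0, κ ≥ 0 satisfy (1/τ)xᵀPx + qᵀx + bᵀz = −κ, Px + Aᵀz + qτ = 0, Ax + s − bτ = 0, s ∈ K, z ∈ K*, and ⟨s, z⟩ + τκ = 0. Then (x/τ, s/τ) is an optimal solution of the primal problem: A(x/τ) + s/τ = b, s/τ ∈ K, and for every x' ∈ ℝⁿ, s' ∈ ℝᵐ with Ax' + s' = b and s' ∈ K, one has ½ (x/τ)ᵀP(x/τ) + qᵀ(x/τ) ≤ ½ x'ᵀPx' + qᵀx'. -/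
open Matrix

/-!
Up to the factor `τ`, the embedding's constraints are the KKT conditions of (P) at
`(x/τ, s/τ)` with multiplier `z/τ`: primal feasibility, stationarity `P x̄ + Aᵀ ȳ + q = 0`,
and `⟨ȳ, s̄⟩ ≤ 0` because `⟨s, z⟩ = -τκ`. For any feasible `(x', s')`, convexity of the
objective gives `f x' ≥ f x̄ + ⟨P x̄ + q, x' - x̄⟩ = f x̄ - ⟨ȳ, A (x' - x̄)⟩ = f x̄ + ⟨ȳ, s'⟩ - ⟨ȳ, s̄⟩`,
and both correction terms are nonnegative since `ȳ ∈ K*`.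
-/

namespace Matrix

variable {ι κ : Type*} [Fintype ι] [Fintype κ]

noncomputable def quadObjective (P : Matrix ι ι ℝ) (q x : ι → ℝ) : ℝ :=
  (1 / 2) * (x ⬝ᵥ (P *ᵥ x)) + q ⬝ᵥ x

theorem IsHermitian.dotProduct_mulVec_comm {P : Matrix ι ι ℝ} (hP : P.IsHermitian) (x y : ι → ℝ) :
    x ⬝ᵥ (P *ᵥ y) = y ⬝ᵥ (P *ᵥ x) := by
  have hPt : Pᵀ = P := by simpa [conjTranspose_eq_transpose_of_trivial] using hP.eq
  simpa [hPt] using dotProduct_transpose_mulVec P x y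

theorem PosSemidef.quadObjective_add_ge {P : Matrix ι ι ℝ} (hP : P.PosSemidef) (q x d : ι → ℝ) :
    quadObjective P q x + (P *ᵥ x + q) ⬝ᵥ d ≤ quadObjective P q (x + d) := by
  have hd : 0 ≤ d ⬝ᵥ (P *ᵥ d) := by simpa using hP.dotProduct_mulVec_nonneg d
  have hsymm := hP.isHermitian.dotProduct_mulVec_comm x d
  simp only [quadObjective, mulVec_add, dotProduct_add, add_dotProduct]
  rw [dotProduct_comm (P *ᵥ x) d, dotProduct_comm q d]
  linarith

theorem PosSemidef.quadObjective_le_of_kkt {P : Matrix ι ι ℝ} (hP : P.PosSemidef)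
    (A : Matrix κ ι ℝ) (q : ι → ℝ) {x x' : ι → ℝ} {b s s' y : κ → ℝ}
    (hfeas : A *ᵥ x + s = b) (hstat : P *ᵥ x + Aᵀ *ᵥ y + q = 0) (hcomp : y ⬝ᵥ s ≤ 0)
    (hfeas' : A *ᵥ x' + s' = b) (hdual : 0 ≤ y ⬝ᵥ s') :
    quadObjective P q x ≤ quadObjective P q x' := by
  have hgrad : P *ᵥ x + q = -(Aᵀ *ᵥ y) := by linear_combination (norm := module) hstat
  have hAd : A *ᵥ (x' - x) = s - s' := by
    rw [mulVec_sub]; linear_combination (norm := module) hfeas' - hfeas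
  have hdir : (P *ᵥ x + q) ⬝ᵥ (x' - x) = y ⬝ᵥ s' - y ⬝ᵥ s := by
    rw [hgrad, neg_dotProduct, dotProduct_comm, dotProduct_transpose_mulVec, hAd, dotProduct_sub]
    ring
  calc quadObjective P q x ≤ quadObjective P q x + (P *ᵥ x + q) ⬝ᵥ (x' - x) := by linarith
    _ ≤ quadObjective P q (x + (x' - x)) := hP.quadObjective_add_ge q x _
    _ = quadObjective P q x' := by rw [add_sub_cancel]

end Matrix

theorem primal_recovery_general {n m : ℕ}
    (P : Matrix (Fin n) (Fin n) ℝ) (hP : P.PosSemidef)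
    (A : Matrix (Fin m) (Fin n) ℝ) (q : Fin n → ℝ) (b : Fin m → ℝ)
    (K : Set (Fin m → ℝ))
    (hKcone : ∀ c : ℝ, 0 < c → ∀ v ∈ K, c • v ∈ K)
    (x : Fin n → ℝ) (z s : Fin m → ℝ) (τ κ : ℝ)
    (hτ : 0 < τ) (hκ : 0 ≤ κ)
    (h2 : P *ᵥ x + Aᵀ *ᵥ z + τ • q = 0)
    (h3 : A *ᵥ x + s - τ • b = 0)
    (hs : s ∈ K) (hz : ∀ s' ∈ K, 0 ≤ z ⬝ᵥ s')
    (hcomp : s ⬝ᵥ z + τ * κ = 0) :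
    A *ᵥ (τ⁻¹ • x) + τ⁻¹ • s = b ∧ τ⁻¹ • s ∈ K ∧
      ∀ (x' : Fin n → ℝ) (s' : Fin m → ℝ), A *ᵥ x' + s' = b → s' ∈ K →
        (1/2) * ((τ⁻¹ • x) ⬝ᵥ (P *ᵥ (τ⁻¹ • x))) + q ⬝ᵥ (τ⁻¹ • x) ≤
          (1/2) * (x' ⬝ᵥ (P *ᵥ x')) + q ⬝ᵥ x' := by
  have hτ0 : τ ≠ 0 := hτ.ne'
  have hfeas : A *ᵥ (τ⁻¹ • x) + τ⁻¹ • s = b := by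
    have h3' : A *ᵥ x + s = τ • b := by linear_combination (norm := module) h3
    rw [mulVec_smul, ← smul_add, h3', smul_smul, inv_mul_cancel₀ hτ0, one_smul]
  have hstat : P *ᵥ (τ⁻¹ • x) + Aᵀ *ᵥ (τ⁻¹ • z) + q = 0 := by
    calc P *ᵥ (τ⁻¹ • x) + Aᵀ *ᵥ (τ⁻¹ • z) + q = τ⁻¹ • (P *ᵥ x + Aᵀ *ᵥ z + τ • q) := by
          rw [smul_add, smul_add, smul_smul, inv_mul_cancel₀ hτ0, one_smul, mulVec_smul,
            mulVec_smul]
      _ = 0 := by rw [h2, smul_zero]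
  have hcomp' : (τ⁻¹ • z) ⬝ᵥ (τ⁻¹ • s) ≤ 0 := by
    have hzs : z ⬝ᵥ s ≤ 0 := by
      rw [dotProduct_comm]; linarith [mul_nonneg hτ.le hκ]
    rw [smul_dotProduct, dotProduct_smul, smul_eq_mul, smul_eq_mul]
    exact mul_nonpos_of_nonneg_of_nonpos (inv_nonneg.2 hτ.le)
      (mul_nonpos_of_nonneg_of_nonpos (inv_nonneg.2 hτ.le) hzs)
  refine ⟨hfeas, hKcone τ⁻¹ (inv_pos.2 hτ) s hs, fun x' s' hfeas' hs' => ?_⟩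
  refine hP.quadObjective_le_of_kkt A q hfeas hstat hcomp' hfeas' ?_
  rw [smul_dotProduct]
  exact mul_nonneg (inv_nonneg.2 hτ.le) (hz s' hs')

/-- Recovery of a primal optimal solution from the homogeneous embedding. -/
theorem primal_recovery {n m : ℕ}
    (P : Matrix (Fin n) (Fin n) ℝ) (hP : P.PosSemidef)
    (A : Matrix (Fin m) (Fin n) ℝ) (q : Fin n → ℝ) (b : Fin m → ℝ)
    (K : Set (Fin m → ℝ)) (hKconv : Convex ℝ K)
    (hKcone : ∀ c : ℝ, 0 < c → ∀ v ∈ K, c • v ∈ K)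
    (x : Fin n → ℝ) (z s : Fin m → ℝ) (τ κ : ℝ)
    (hτ : 0 < τ) (hκ : 0 ≤ κ)
    (h1 : (1/τ) * (x ⬝ᵥ (P *ᵥ x)) + q ⬝ᵥ x + b ⬝ᵥ z = -κ)
    (h2 : P *ᵥ x + Aᵀ *ᵥ z + τ • q = 0)
    (h3 : A *ᵥ x + s - τ • b = 0)
    (hs : s ∈ K) (hz : ∀ s' ∈ K, 0 ≤ z ⬝ᵥ s')
    (hcomp : s ⬝ᵥ z + τ * κ = 0) :
    A *ᵥ (τ⁻¹ • x) + τ⁻¹ • s = b ∧ τ⁻¹ • s ∈ K ∧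
      ∀ (x' : Fin n → ℝ) (s' : Fin m → ℝ), A *ᵥ x' + s' = b → s' ∈ K →
        (1/2) * ((τ⁻¹ • x) ⬝ᵥ (P *ᵥ (τ⁻¹ • x))) + q ⬝ᵥ (τ⁻¹ • x) ≤
          (1/2) * (x' ⬝ᵥ (P *ᵥ x')) + q ⬝ᵥ x' :=
  primal_recovery_general P hP A q b K hKcone x z s τ κ hτ hκ h2 h3 hs hz hcomp
end

section
/- Recovery of a dual optimal solution from the homogeneous embedding: let P be a symmetric positive semidefinite n×n real matrix, A ∈ ℝᵐˣⁿ, q ∈ ℝⁿ, b ∈ ℝᵐ, and let K be a convex cone in ℝᵐ (closed under multiplication by positive scalars). Suppose x ∈ ℝⁿ, z, s ∈ ℝᵐ, τ > 0, κ ≥ 0 satisfy (1/τ)xᵀPx + qᵀx + bᵀz = −κ, Px + Aᵀz + qτ = 0, Ax + s − bτ = 0, s ∈ K, z ∈ K*, and ⟨s, z⟩ + τκ = 0. Then (x/τ, z/τ) is an optimal solution of the dual problem: P(x/τ) + Aᵀ(z/τ) = −q, z/τ ∈ K*, and for every x̂ ∈ ℝⁿ, ẑ ∈ ℝᵐ with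 P x̂ + Aᵀẑ = −q and ẑ ∈ K*, one has −½ (x/τ)ᵀP(x/τ) − bᵀ(z/τ) ≥ −½ x̂ᵀP x̂ − bᵀẑ. -/
open Matrix

/-!
Rescaling a point of the embedding by `τ⁻¹` gives a primal-feasible `x/τ` (with slack `s/τ`) and
a dual-feasible `(x/τ, z/τ)`, and the first embedding equation says that the dual objective at
`(x/τ, z/τ)` exceeds the primal objective at `x/τ` by `κ/τ ≥ 0`. Weak duality bounds every dual
objective value by that primal value, so `(x/τ, z/τ)` is dual optimal.
-/

section QuadraticDuality

variable {ι η : Type*} [Fintype ι] [Fintype η]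
  (P : Matrix ι ι ℝ) (A : Matrix η ι ℝ) (q : ι → ℝ) (b : η → ℝ)

noncomputable def primalObjective (x : ι → ℝ) : ℝ := (1/2) * (x ⬝ᵥ (P *ᵥ x)) + q ⬝ᵥ x

noncomputable def dualObjective (x : ι → ℝ) (z : η → ℝ) : ℝ := -(1/2) * (x ⬝ᵥ (P *ᵥ x)) - b ⬝ᵥ z

variable {P A q b}

theorem primalObjective_sub_dualObjective (hP : P.IsSymm) {x xd : ι → ℝ} {s zd : η → ℝ}
    (hprimal : A *ᵥ x + s = b) (hdual : P *ᵥ xd + Aᵀ *ᵥ zd = -q) :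
    primalObjective P q x - dualObjective P b xd zd =
      (1/2) * ((x - xd) ⬝ᵥ (P *ᵥ (x - xd))) + zd ⬝ᵥ s := by
  have hq : q ⬝ᵥ x = -(x ⬝ᵥ (P *ᵥ xd)) - (A *ᵥ x) ⬝ᵥ zd := by
    rw [← neg_neg q, ← hdual, neg_dotProduct, add_dotProduct, dotProduct_comm (P *ᵥ xd),
      mulVec_transpose, ← dotProduct_mulVec, dotProduct_comm zd]
    ring
  have hsymm : xd ⬝ᵥ (P *ᵥ x) = x ⬝ᵥ (P *ᵥ xd) := by
    rw [dotProduct_mulVec, ← mulVec_transpose, hP.eq, dotProduct_comm]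
  subst hprimal
  simp only [primalObjective, dualObjective, hq, mulVec_sub, sub_dotProduct, dotProduct_sub,
    add_dotProduct, hsymm, dotProduct_comm s zd]
  ring

theorem dualObjective_le_primalObjective (hP : P.PosSemidef) {x xd : ι → ℝ} {s zd : η → ℝ}
    (hprimal : A *ᵥ x + s = b) (hdual : P *ᵥ xd + Aᵀ *ᵥ zd = -q) (hsz : 0 ≤ zd ⬝ᵥ s) :
    dualObjective P b xd zd ≤ primalObjective P q x := by
  have hgap := primalObjective_sub_dualObjective (isHermitian_iff_isSymm.mp hP.isHermitian)
    hprimal hdual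
  have hquad := hP.dotProduct_mulVec_nonneg (x - xd)
  rw [star_trivial] at hquad
  linarith

end QuadraticDuality

section HomogeneousEmbedding

variable {ι η : Type*} [Fintype ι]
  {P : Matrix ι ι ℝ} {A : Matrix η ι ℝ} {q : ι → ℝ} {b : η → ℝ}
  {x : ι → ℝ} {z s : η → ℝ} {τ : ℝ}

theorem mulVec_inv_smul_add_eq_neg [Fintype η] (hτ : τ ≠ 0) (h : P *ᵥ x + Aᵀ *ᵥ z + τ • q = 0) :
    P *ᵥ (τ⁻¹ • x) + Aᵀ *ᵥ (τ⁻¹ • z) = -q := by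
  rw [mulVec_smul, mulVec_smul, ← smul_add, eq_neg_of_add_eq_zero_left h, smul_neg,
    inv_smul_smul₀ hτ]

theorem mulVec_inv_smul_add_inv_smul (hτ : τ ≠ 0) (h : A *ᵥ x + s - τ • b = 0) :
    A *ᵥ (τ⁻¹ • x) + τ⁻¹ • s = b := by
  rw [mulVec_smul, ← smul_add, sub_eq_zero.mp h, inv_smul_smul₀ hτ]

theorem dualObjective_inv_smul [Fintype η] {κ : ℝ}
    (h : (1/τ) * (x ⬝ᵥ (P *ᵥ x)) + q ⬝ᵥ x + b ⬝ᵥ z = -κ) :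
    dualObjective P b (τ⁻¹ • x) (τ⁻¹ • z) = primalObjective P q (τ⁻¹ • x) + κ / τ := by
  simp only [dualObjective, primalObjective, mulVec_smul, smul_dotProduct, dotProduct_smul,
    smul_eq_mul, div_eq_mul_inv]
  linear_combination (-τ⁻¹) * h

end HomogeneousEmbedding

theorem dual_recovery_general {n m : ℕ}
    (P : Matrix (Fin n) (Fin n) ℝ) (hP : P.PosSemidef)
    (A : Matrix (Fin m) (Fin n) ℝ) (q : Fin n → ℝ) (b : Fin m → ℝ)
    (K : Set (Fin m → ℝ))
    (x : Fin n → ℝ) (z s : Fin m → ℝ) (τ κ : ℝ)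
    (hτ : 0 < τ) (hκ : 0 ≤ κ)
    (h1 : (1/τ) * (x ⬝ᵥ (P *ᵥ x)) + q ⬝ᵥ x + b ⬝ᵥ z = -κ)
    (h2 : P *ᵥ x + Aᵀ *ᵥ z + τ • q = 0)
    (h3 : A *ᵥ x + s - τ • b = 0)
    (hs : s ∈ K) (hz : ∀ s' ∈ K, 0 ≤ z ⬝ᵥ s') :
    P *ᵥ (τ⁻¹ • x) + Aᵀ *ᵥ (τ⁻¹ • z) = -q ∧ (∀ s' ∈ K, 0 ≤ (τ⁻¹ • z) ⬝ᵥ s') ∧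
      ∀ (xhat : Fin n → ℝ) (zhat : Fin m → ℝ),
        P *ᵥ xhat + Aᵀ *ᵥ zhat = -q → (∀ s' ∈ K, 0 ≤ zhat ⬝ᵥ s') →
        -(1/2) * ((τ⁻¹ • x) ⬝ᵥ (P *ᵥ (τ⁻¹ • x))) - b ⬝ᵥ (τ⁻¹ • z) ≥
          -(1/2) * (xhat ⬝ᵥ (P *ᵥ xhat)) - b ⬝ᵥ zhat := by
  refine ⟨mulVec_inv_smul_add_eq_neg hτ.ne' h2, fun s' hs' => ?_, fun xhat zhat hhat hzhat => ?_⟩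
  · rw [smul_dotProduct, smul_eq_mul]
    exact mul_nonneg (inv_nonneg.mpr hτ.le) (hz s' hs')
  · have hslack : 0 ≤ zhat ⬝ᵥ (τ⁻¹ • s) := by
      rw [dotProduct_smul, smul_eq_mul]
      exact mul_nonneg (inv_nonneg.mpr hτ.le) (hzhat s hs)
    calc dualObjective P b xhat zhat
        ≤ primalObjective P q (τ⁻¹ • x) :=
          dualObjective_le_primalObjective hP (mulVec_inv_smul_add_inv_smul hτ.ne' h3) hhat hslack
      _ ≤ primalObjective P q (τ⁻¹ • x) + κ / τ := le_add_of_nonneg_right (div_nonneg hκ hτ.le)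
      _ = dualObjective P b (τ⁻¹ • x) (τ⁻¹ • z) := (dualObjective_inv_smul h1).symm

/-- Recovery of a dual optimal solution from the homogeneous embedding. -/
theorem dual_recovery {n m : ℕ}
    (P : Matrix (Fin n) (Fin n) ℝ) (hP : P.PosSemidef)
    (A : Matrix (Fin m) (Fin n) ℝ) (q : Fin n → ℝ) (b : Fin m → ℝ)
    (K : Set (Fin m → ℝ)) (hKconv : Convex ℝ K)
    (hKcone : ∀ c : ℝ, 0 < c → ∀ v ∈ K, c • v ∈ K)
    (x : Fin n → ℝ) (z s : Fin m → ℝ) (τ κ : ℝ)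
    (hτ : 0 < τ) (hκ : 0 ≤ κ)
    (h1 : (1/τ) * (x ⬝ᵥ (P *ᵥ x)) + q ⬝ᵥ x + b ⬝ᵥ z = -κ)
    (h2 : P *ᵥ x + Aᵀ *ᵥ z + τ • q = 0)
    (h3 : A *ᵥ x + s - τ • b = 0)
    (hs : s ∈ K) (hz : ∀ s' ∈ K, 0 ≤ z ⬝ᵥ s')
    (hcomp : s ⬝ᵥ z + τ * κ = 0) :
    P *ᵥ (τ⁻¹ • x) + Aᵀ *ᵥ (τ⁻¹ • z) = -q ∧ (∀ s' ∈ K, 0 ≤ (τ⁻¹ • z) ⬝ᵥ s') ∧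
      ∀ (xhat : Fin n → ℝ) (zhat : Fin m → ℝ),
        P *ᵥ xhat + Aᵀ *ᵥ zhat = -q → (∀ s' ∈ K, 0 ≤ zhat ⬝ᵥ s') →
        -(1/2) * ((τ⁻¹ • x) ⬝ᵥ (P *ᵥ (τ⁻¹ • x))) - b ⬝ᵥ (τ⁻¹ • z) ≥
          -(1/2) * (xhat ⬝ᵥ (P *ᵥ xhat)) - b ⬝ᵥ zhat :=
  dual_recovery_general P hP A q b K x z s τ κ hτ hκ h1 h2 h3 hs hz
end

section
/- Infeasibility detection when κ > 0 in the homogeneous embedding: let P be a symmetric positive semidefinite n×n real matrix, A ∈ ℝᵐˣⁿ, q ∈ ℝⁿ, b ∈ ℝᵐ, and K ⊆ ℝᵐ. Suppose x ∈ ℝⁿ, z, s ∈ ℝᵐ and κ > 0 satisfy Px + Aᵀz = 0, Ax + s = 0, qᵀx + bᵀz = −κ, s ∈ K, z ∈ K*, and ⟨s, z⟩ = 0. Then Px = 0, Aᵀz = 0, −Ax ∈ K, and qᵀx + bᵀz < 0; consequently at least one of the following holds: z is a strong primal infeasibility certificate (Aᵀz = 0, z ∈ K*, bᵀz < 0), or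 x is a strong dual infeasibility certificate (Px = 0, −Ax ∈ K, qᵀx < 0). -/
open Matrix

/-- Infeasibility detection when κ > 0 in the homogeneous embedding. -/
theorem infeasibility_detection {n m : ℕ}
    (P : Matrix (Fin n) (Fin n) ℝ) (hP : P.PosSemidef)
    (A : Matrix (Fin m) (Fin n) ℝ) (q : Fin n → ℝ) (b : Fin m → ℝ)
    (K : Set (Fin m → ℝ))
    (x : Fin n → ℝ) (z s : Fin m → ℝ) (κ : ℝ) (hκ : 0 < κ)
    (h1 : P *ᵥ x + Aᵀ *ᵥ z = 0)
    (h2 : A *ᵥ x + s = 0)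
    (h3 : q ⬝ᵥ x + b ⬝ᵥ z = -κ)
    (hs : s ∈ K) (hz : ∀ s' ∈ K, 0 ≤ z ⬝ᵥ s')
    (hcomp : s ⬝ᵥ z = 0) :
    P *ᵥ x = 0 ∧ Aᵀ *ᵥ z = 0 ∧ -(A *ᵥ x) ∈ K ∧ q ⬝ᵥ x + b ⬝ᵥ z < 0 ∧
      ((Aᵀ *ᵥ z = 0 ∧ (∀ s' ∈ K, 0 ≤ z ⬝ᵥ s') ∧ b ⬝ᵥ z < 0) ∨
        (P *ᵥ x = 0 ∧ -(A *ᵥ x) ∈ K ∧ q ⬝ᵥ x < 0)) := by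
  have hAx : A *ᵥ x = -s := by
    have := h2; linear_combination (norm := module) this
  -- x ⬝ (Aᵀ z) = (A x) ⬝ z = -s ⬝ z = 0
  have hxAz : x ⬝ᵥ (Aᵀ *ᵥ z) = 0 := by
    rw [dotProduct_mulVec, ← mulVec_transpose, transpose_transpose, hAx]
    simp [neg_dotProduct]
    exact hcomp
  have hxPx : x ⬝ᵥ (P *ᵥ x) = 0 := by
    have := congrArg (fun v => x ⬝ᵥ v) h1
    simpa [dotProduct_add, hxAz] using this
  have hPx : P *ᵥ x = 0 := by
    have := (hP.dotProduct_mulVec_zero_iff x).mp (by simpa using hxPx)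
    exact this
  have hAz : Aᵀ *ᵥ z = 0 := by
    have := h1; rw [hPx] at this; simpa using this
  have hmem : -(A *ᵥ x) ∈ K := by rw [hAx, neg_neg]; exact hs
  have hlt : q ⬝ᵥ x + b ⬝ᵥ z < 0 := by rw [h3]; linarith
  refine ⟨hPx, hAz, hmem, hlt, ?_⟩
  by_cases hb : b ⬝ᵥ z < 0
  · exact Or.inl ⟨hAz, hz, hb⟩
  · exact Or.inr ⟨hPx, hmem, by linarith⟩
end

section
/- Correctness of the reduction of the 4×4 step-equation system to two 2×2 solves: let P be a symmetric n×n real matrix, H an m×m real matrix, A ∈ ℝᵐˣⁿ, q ∈ ℝⁿ, b ∈ ℝᵐ, τ > 0, κ ∈ ℝ, x ∈ ℝⁿ, and set ξ = x/τ. Suppose (Δx₁, Δz₁) and (Δx₂, Δz₂) satisfy P Δx₁ + Aᵀ Δz₁ = d_x, A Δx₁ − H Δz₁ = −(d_z − d_s) and P Δx₂ + Aᵀ Δz₂ = −q, A Δx₂ − H Δz₂ = b, and suppose D := κ/τ + ξᵀPξ − (2Pξ + q)ᵀ Δx₂ − bᵀ Δz₂ ≠ 0. Define Δτ = (d_τ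 − d_κ/τ + (2Pξ + q)ᵀ Δx₁ + bᵀ Δz₁)/D, Δx = Δx₁ + Δτ Δx₂, Δz = Δz₁ + Δτ Δz₂, Δs = −d_s − H Δz, and Δκ = −(d_κ + κ Δτ)/τ. Then (Δx, Δz, Δτ, Δs, Δκ) satisfies: P Δx + Aᵀ Δz + q Δτ = d_x; Δs + A Δx − b Δτ = −d_z; Δκ + (q + 2Pξ)ᵀ Δx + bᵀ Δz − (ξᵀPξ) Δτ = −d_τ; H Δz + Δs = −d_s; and κ Δτ + τ Δκ = −d_κ. -/
/-!
Both 2×2 solves use the same matrix `K = [[P, Aᵀ], [A, -H]]`, so `(Δx, Δz) = (Δx₁, Δz₁) + Δτ (Δx₂, Δz₂)`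
satisfies the first two block rows with right-hand side `(d_x, -(d_z - d_s)) + Δτ (-q, b)` for every `Δτ`.
The remaining scalar row is affine in `Δτ` once `Δκ` is eliminated through the complementarity row,
with slope `-D`; `Δτ` is exactly its root.
-/

open Matrix

section AffineCombination

variable {R ι κ ν : Type*} [CommRing R] [Fintype κ] [Fintype ν]

theorem mulVec_add_mulVec_add_smul (M : Matrix ι κ R) (N : Matrix ι ν R)
    (u₁ u₂ : κ → R) (v₁ v₂ : ν → R) (t : R) :
    M *ᵥ (u₁ + t • u₂) + N *ᵥ (v₁ + t • v₂) = M *ᵥ u₁ + N *ᵥ v₁ + t • (M *ᵥ u₂ + N *ᵥ v₂) := by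
  simp only [mulVec_add, mulVec_smul, smul_add]
  abel

theorem mulVec_sub_mulVec_add_smul (M : Matrix ι κ R) (N : Matrix ι ν R)
    (u₁ u₂ : κ → R) (v₁ v₂ : ν → R) (t : R) :
    M *ᵥ (u₁ + t • u₂) - N *ᵥ (v₁ + t • v₂) = M *ᵥ u₁ - N *ᵥ v₁ + t • (M *ᵥ u₂ - N *ᵥ v₂) := by
  simp only [mulVec_add, mulVec_smul, smul_sub]
  abel

theorem dotProduct_add_dotProduct_add_smul (c u₁ u₂ : κ → R) (d v₁ v₂ : ν → R) (t : R) :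
    c ⬝ᵥ (u₁ + t • u₂) + d ⬝ᵥ (v₁ + t • v₂) = c ⬝ᵥ u₁ + d ⬝ᵥ v₁ + t * (c ⬝ᵥ u₂ + d ⬝ᵥ v₂) := by
  simp only [dotProduct_add, dotProduct_smul, smul_eq_mul]
  ring

end AffineCombination

theorem step_reduction_correct_general {n m : ℕ}
    (P : Matrix (Fin n) (Fin n) ℝ)
    (H : Matrix (Fin m) (Fin m) ℝ)
    (A : Matrix (Fin m) (Fin n) ℝ) (q : Fin n → ℝ) (b : Fin m → ℝ)
    (τ κ : ℝ) (hτ : 0 < τ)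
    (ξ : Fin n → ℝ)
    (dx : Fin n → ℝ) (dz ds : Fin m → ℝ) (dτ dκ : ℝ)
    (Δx₁ Δx₂ : Fin n → ℝ) (Δz₁ Δz₂ : Fin m → ℝ)
    (h11 : P *ᵥ Δx₁ + Aᵀ *ᵥ Δz₁ = dx)
    (h12 : A *ᵥ Δx₁ - H *ᵥ Δz₁ = -(dz - ds))
    (h21 : P *ᵥ Δx₂ + Aᵀ *ᵥ Δz₂ = -q)
    (h22 : A *ᵥ Δx₂ - H *ᵥ Δz₂ = b)
    (D : ℝ)
    (hD : D = κ/τ + ξ ⬝ᵥ (P *ᵥ ξ) - ((2:ℝ) • (P *ᵥ ξ) + q) ⬝ᵥ Δx₂ - b ⬝ᵥ Δz₂)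
    (hD0 : D ≠ 0)
    (Δτ : ℝ)
    (hΔτ : Δτ = (dτ - dκ/τ + ((2:ℝ) • (P *ᵥ ξ) + q) ⬝ᵥ Δx₁ + b ⬝ᵥ Δz₁) / D)
    (Δx : Fin n → ℝ) (hΔx : Δx = Δx₁ + Δτ • Δx₂)
    (Δz : Fin m → ℝ) (hΔz : Δz = Δz₁ + Δτ • Δz₂)
    (Δs : Fin m → ℝ) (hΔs : Δs = -ds - H *ᵥ Δz)
    (Δκ : ℝ) (hΔκ : Δκ = -(dκ + κ * Δτ) / τ) :
    P *ᵥ Δx + Aᵀ *ᵥ Δz + Δτ • q = dx ∧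
    Δs + A *ᵥ Δx - Δτ • b = -dz ∧
    Δκ + (q + (2:ℝ) • (P *ᵥ ξ)) ⬝ᵥ Δx + b ⬝ᵥ Δz - (ξ ⬝ᵥ (P *ᵥ ξ)) * Δτ = -dτ ∧
    H *ᵥ Δz + Δs = -ds ∧
    κ * Δτ + τ * Δκ = -dκ := by
  have hrow₁ : P *ᵥ Δx + Aᵀ *ᵥ Δz = dx - Δτ • q := by
    rw [hΔx, hΔz, mulVec_add_mulVec_add_smul, h11, h21, smul_neg, sub_eq_add_neg]
  have hrow₂ : A *ᵥ Δx - H *ᵥ Δz = -(dz - ds) + Δτ • b := by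
    rw [hΔx, hΔz, mulVec_sub_mulVec_add_smul, h12, h22]
  have hdot := dotProduct_add_dotProduct_add_smul (q + (2:ℝ) • (P *ᵥ ξ)) Δx₁ Δx₂ b Δz₁ Δz₂ Δτ
  rw [← hΔx, ← hΔz] at hdot
  have hΔτD : Δτ * D = dτ - dκ/τ + ((2:ℝ) • (P *ᵥ ξ) + q) ⬝ᵥ Δx₁ + b ⬝ᵥ Δz₁ := by
    rw [hΔτ, div_mul_cancel₀ _ hD0]
  rw [add_comm ((2:ℝ) • (P *ᵥ ξ)) q] at hD hΔτD
  refine ⟨?_, ?_, ?_, ?_, ?_⟩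
  · rw [hrow₁, sub_add_cancel]
  · rw [hΔs]
    linear_combination (norm := module) hrow₂
  · linear_combination hΔκ + hdot - hΔτD + Δτ * hD
  · rw [hΔs, add_sub_cancel]
  · rw [hΔκ, mul_div_cancel₀ _ hτ.ne']
    ring

/-- Correctness of the reduction of the 4×4 step-equation system to two 2×2 solves. -/
theorem step_reduction_correct {n m : ℕ}
    (P : Matrix (Fin n) (Fin n) ℝ) (hP : P.IsSymm)
    (H : Matrix (Fin m) (Fin m) ℝ)
    (A : Matrix (Fin m) (Fin n) ℝ) (q : Fin n → ℝ) (b : Fin m → ℝ)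
    (τ κ : ℝ) (hτ : 0 < τ) (x : Fin n → ℝ)
    (ξ : Fin n → ℝ) (hξ : ξ = τ⁻¹ • x)
    (dx : Fin n → ℝ) (dz ds : Fin m → ℝ) (dτ dκ : ℝ)
    (Δx₁ Δx₂ : Fin n → ℝ) (Δz₁ Δz₂ : Fin m → ℝ)
    (h11 : P *ᵥ Δx₁ + Aᵀ *ᵥ Δz₁ = dx)
    (h12 : A *ᵥ Δx₁ - H *ᵥ Δz₁ = -(dz - ds))
    (h21 : P *ᵥ Δx₂ + Aᵀ *ᵥ Δz₂ = -q)
    (h22 : A *ᵥ Δx₂ - H *ᵥ Δz₂ = b)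
    (D : ℝ)
    (hD : D = κ/τ + ξ ⬝ᵥ (P *ᵥ ξ) - ((2:ℝ) • (P *ᵥ ξ) + q) ⬝ᵥ Δx₂ - b ⬝ᵥ Δz₂)
    (hD0 : D ≠ 0)
    (Δτ : ℝ)
    (hΔτ : Δτ = (dτ - dκ/τ + ((2:ℝ) • (P *ᵥ ξ) + q) ⬝ᵥ Δx₁ + b ⬝ᵥ Δz₁) / D)
    (Δx : Fin n → ℝ) (hΔx : Δx = Δx₁ + Δτ • Δx₂)
    (Δz : Fin m → ℝ) (hΔz : Δz = Δz₁ + Δτ • Δz₂)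
    (Δs : Fin m → ℝ) (hΔs : Δs = -ds - H *ᵥ Δz)
    (Δκ : ℝ) (hΔκ : Δκ = -(dκ + κ * Δτ) / τ) :
    P *ᵥ Δx + Aᵀ *ᵥ Δz + Δτ • q = dx ∧
    Δs + A *ᵥ Δx - Δτ • b = -dz ∧
    Δκ + (q + (2:ℝ) • (P *ᵥ ξ)) ⬝ᵥ Δx + b ⬝ᵥ Δz - (ξ ⬝ᵥ (P *ᵥ ξ)) * Δτ = -dτ ∧
    H *ᵥ Δz + Δs = -ds ∧
    κ * Δτ + τ * Δκ = -dκ :=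
  step_reduction_correct_general P H A q b τ κ hτ ξ dx dz ds dτ dκ Δx₁ Δx₂ Δz₁ Δz₂ h11 h12 h21 h22 D
    hD hD0 Δτ hΔτ Δx hΔx Δz hΔz Δs hΔs Δκ hΔκ
end

section
/- Dual of the exponential cone: define K_exp = {(x, y, z) ∈ ℝ³ : y > 0 and y·exp(x/y) ≤ z} ∪ {(x, 0, z) : x ≤ 0, z ≥ 0}. Then (u, v, w) ∈ ℝ³ satisfies u·x + v·y + w·z ≥ 0 for every (x, y, z) ∈ K_exp if and only if (u, v, w) lies in the set {(u, v, w) : u < 0 and −u·exp(v/u) ≤ e·w} ∪ {(0, v, w) : v ≥ 0, w ≥ 0}, where e = exp(1). -/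
/-- Dual of the exponential cone. -/
theorem exp_cone_dual (u v w : ℝ) :
    (∀ x y z : ℝ,
        ((0 < y ∧ y * Real.exp (x / y) ≤ z) ∨ (y = 0 ∧ x ≤ 0 ∧ 0 ≤ z)) →
        0 ≤ u * x + v * y + w * z) ↔
      ((u < 0 ∧ -u * Real.exp (v / u) ≤ Real.exp 1 * w) ∨
        (u = 0 ∧ 0 ≤ v ∧ 0 ≤ w)) := by
  constructor
  · intro h
    have hw : 0 ≤ w := by
      have h0 := h 0 0 1 (Or.inr ⟨rfl, le_refl 0, zero_le_one⟩)
      linarith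
    have hu : u ≤ 0 := by
      have h0 := h (-1) 0 0 (Or.inr ⟨rfl, by norm_num, le_refl 0⟩)
      linarith
    have hpt : ∀ t : ℝ, 0 < t → 0 ≤ u * Real.log t + v + w * t := by
      intro t ht
      have h0 := h (Real.log t) 1 t
        (Or.inl ⟨one_pos, by rw [div_one, Real.exp_log ht, one_mul]⟩)
      linarith
    rcases hu.lt_or_eq with hu0 | hu0
    · left
      refine ⟨hu0, ?_⟩
      have hune : u ≠ 0 := ne_of_lt hu0
      have hw' : 0 < w := by
        rcases hw.eq_or_lt with h1 | h1
        · exfalso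
          subst h1
          have h0 := hpt (Real.exp ((-v - 1) / u)) (Real.exp_pos _)
          rw [Real.log_exp] at h0
          have h2 : u * ((-v - 1) / u) = -v - 1 := by field_simp
          linarith
        · exact h1
      set c : ℝ := -u / w with hc
      have hc0 : 0 < c := div_pos (by linarith) hw'
      have key := hpt c hc0
      have hwc : w * c = -u := by rw [hc]; field_simp
      have key' : 0 ≤ u * Real.log c + v - u := by linarith
      have h1 : Real.log c ≤ (u - v) / u := by
        rw [le_div_iff_of_neg hu0]
        linarith
      have h2 : (u - v) / u = 1 - v / u := by field_simp
      have hlog : Real.log c ≤ 1 - v / u := by linarith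
      have h3 : c ≤ Real.exp (1 - v / u) := by
        calc c = Real.exp (Real.log c) := (Real.exp_log hc0).symm
        _ ≤ Real.exp (1 - v / u) := Real.exp_le_exp.mpr hlog
      have h4 : -u ≤ w * Real.exp (1 - v / u) := by
        have h5 := mul_le_mul_of_nonneg_left h3 hw'.le
        linarith
      have h5 : w * Real.exp (1 - v / u) * Real.exp (v / u) = Real.exp 1 * w := by
        rw [mul_assoc, ← Real.exp_add]
        ring_nf
      have h6 := mul_le_mul_of_nonneg_right h4 (Real.exp_pos (v / u)).le
      linarith
    · right
      subst hu0
      refine ⟨rfl, ?_, hw⟩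
      by_contra hv
      push_neg at hv
      rcases hw.eq_or_lt with h1 | h1
      · subst h1
        have h0 := hpt 1 one_pos
        simp at h0
        linarith
      · have ht : 0 < -v / (2 * w) := div_pos (by linarith) (by linarith)
        have h0 := hpt (-v / (2 * w)) ht
        have h2 : w * (-v / (2 * w)) = -v / 2 := by field_simp
        linarith
  · intro hd x y z hxyz
    rcases hd with ⟨hu, hkey⟩ | ⟨hu, hv, hw⟩
    · have hw : 0 < w := by
        nlinarith [Real.exp_pos (v / u), Real.exp_pos 1,
          mul_pos (neg_pos.mpr hu) (Real.exp_pos (v / u))]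
      rcases hxyz with ⟨hy, hz⟩ | ⟨hy, hx, hz⟩
      · set c : ℝ := -u / w with hc
        have hc0 : 0 < c := div_pos (by linarith) hw
        have hwc : w * c = -u := by rw [hc]; field_simp
        have h5 : Real.exp (1 - v / u) * Real.exp (v / u) = Real.exp 1 := by
          rw [← Real.exp_add]; ring_nf
        have h5w : w * Real.exp (1 - v / u) * Real.exp (v / u) = Real.exp 1 * w := by
          rw [mul_assoc, h5]; ring
        have h6 : (-u) * Real.exp (v / u) ≤ (w * Real.exp (1 - v / u)) * Real.exp (v / u) := by
          linarith
        have h4 : -u ≤ w * Real.exp (1 - v / u) :=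
          le_of_mul_le_mul_right h6 (Real.exp_pos _)
        have h3 : c ≤ Real.exp (1 - v / u) := by
          rw [hc, div_le_iff₀ hw]
          linarith
        have hlog : Real.log c ≤ 1 - v / u := by
          rw [← Real.log_exp (1 - v / u)]
          exact Real.log_le_log hc0 h3
        have key' : 0 ≤ u * Real.log c + v - u := by
          have h7 := mul_le_mul_of_nonneg_left hlog (by linarith : (0:ℝ) ≤ -u)
          have h8 : (-u) * (1 - v / u) = -u + v := by field_simp [ne_of_lt hu]; ring
          linarith
        have h9 := Real.add_one_le_exp (x / y - Real.log c)
        have h10 : Real.exp (Real.log c) * Real.exp (x / y - Real.log c) = Real.exp (x / y) := by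
          rw [← Real.exp_add]; ring_nf
        rw [Real.exp_log hc0] at h10
        have hEx : c * ((x / y - Real.log c) + 1) ≤ Real.exp (x / y) := by
          calc c * ((x / y - Real.log c) + 1)
              ≤ c * Real.exp (x / y - Real.log c) :=
                mul_le_mul_of_nonneg_left h9 hc0.le
          _ = Real.exp (x / y) := h10
        have hxy2 : y * (x / y) = x := by field_simp
        have step1 : w * (y * Real.exp (x / y)) ≤ w * z :=
          mul_le_mul_of_nonneg_left hz hw.le
        have step3 : (w * y) * (c * ((x / y - Real.log c) + 1))
            ≤ (w * y) * Real.exp (x / y) :=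
          mul_le_mul_of_nonneg_left hEx (mul_nonneg hw.le hy.le)
        have heq : (w * y) * (c * ((x / y - Real.log c) + 1))
            = -u * x + u * y * Real.log c - u * y := by
          have e1 : (w * y) * (c * ((x / y - Real.log c) + 1))
              = (w * c) * (y * (x / y)) - (w * c) * (y * Real.log c) + (w * c) * y := by ring
          rw [e1, hwc, hxy2]; ring
        rw [heq] at step3
        have step4 : 0 ≤ y * (u * Real.log c + v - u) := mul_nonneg hy.le key'
        nlinarith [step1, step3, step4]
      · subst hy
        nlinarith [mul_nonneg (neg_nonneg.mpr hu.le) (neg_nonneg.mpr hx),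
          mul_nonneg hw.le hz]
    · subst hu
      rcases hxyz with ⟨hy, hz⟩ | ⟨hy, hx, hz⟩
      · have hz0 : 0 < z := lt_of_lt_of_le (mul_pos hy (Real.exp_pos _)) hz
        nlinarith [mul_nonneg hv hy.le, mul_nonneg hw hz0.le]
      · subst hy
        nlinarith [mul_nonneg hw hz]
end

section
/- Dual of the power cone: let α ∈ (0, 1) and define K_pow,α = {(x, y, z) ∈ ℝ³ : x ≥ 0, y ≥ 0, x^α · y^(1−α) ≥ |z|}. Then (u, v, w) ∈ ℝ³ satisfies u·x + v·y + w·z ≥ 0 for every (x, y, z) ∈ K_pow,α if and only if u ≥ 0, v ≥ 0, and (u/α)^α · (v/(1−α))^(1−α) ≥ |w|. -/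
private lemma wz_key {w : ℝ} (hw : w ≠ 0) (s : ℝ) : w * (-(w / |w|) * s) = -(|w| * s) := by
  have h : w * (w / |w|) = |w| := by
    rw [mul_div_assoc', ← sq, ← sq_abs, sq]
    exact mul_div_cancel_right₀ _ (abs_ne_zero.mpr hw)
  linear_combination (-s) * h

/-- Dual of the power cone. -/
theorem pow_cone_dual (α : ℝ) (hα0 : 0 < α) (hα1 : α < 1) (u v w : ℝ) :
    (∀ x y z : ℝ, 0 ≤ x → 0 ≤ y → |z| ≤ x ^ α * y ^ (1 - α) →
        0 ≤ u * x + v * y + w * z) ↔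
      (0 ≤ u ∧ 0 ≤ v ∧ |w| ≤ (u / α) ^ α * (v / (1 - α)) ^ (1 - α)) := by
  have h1α : (0:ℝ) < 1 - α := by linarith
  constructor
  · intro h
    have hu : 0 ≤ u := by
      have := h 1 0 0 zero_le_one le_rfl
        (by simp [Real.zero_rpow (ne_of_gt h1α)])
      linarith
    have hv : 0 ≤ v := by
      have := h 0 1 0 le_rfl zero_le_one
        (by simp [Real.zero_rpow (ne_of_gt hα0)])
      linarith
    refine ⟨hu, hv, ?_⟩
    by_cases hw : w = 0
    · subst hw
      simpa using mul_nonneg (Real.rpow_nonneg (by positivity) _)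
        (Real.rpow_nonneg (by positivity) _)
    · have hwpos : 0 < |w| := abs_pos.mpr hw
      rcases eq_or_lt_of_le hu with hu0 | hu0
      · exfalso
        set x : ℝ := ((v + 1) / |w|) ^ (α⁻¹) with hxdef
        have hx0 : 0 ≤ x := Real.rpow_nonneg (by positivity) _
        have hxα : x ^ α = (v + 1) / |w| :=
          Real.rpow_inv_rpow (by positivity) (ne_of_gt hα0)
        have hxαpos : 0 < x ^ α := by rw [hxα]; positivity
        have hz : |(-(w / |w|) * x ^ α)| ≤ x ^ α * (1:ℝ) ^ (1 - α) := by
          rw [Real.one_rpow, abs_mul, abs_neg, abs_div, abs_abs,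
            div_self (ne_of_gt hwpos), abs_of_nonneg hxαpos.le]
          simp
        have hH := h x 1 (-(w / |w|) * x ^ α) hx0 zero_le_one hz
        rw [wz_key hw, hxα] at hH
        have hcan : |w| * ((v + 1) / |w|) = v + 1 := by field_simp
        rw [hcan, ← hu0] at hH
        linarith
      rcases eq_or_lt_of_le hv with hv0 | hv0
      · exfalso
        set y : ℝ := ((u + 1) / |w|) ^ ((1 - α)⁻¹) with hydef
        have hy0 : 0 ≤ y := Real.rpow_nonneg (by positivity) _
        have hyα : y ^ (1 - α) = (u + 1) / |w| :=
          Real.rpow_inv_rpow (by positivity) (ne_of_gt h1α)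
        have hyαpos : 0 < y ^ (1 - α) := by rw [hyα]; positivity
        have hz : |(-(w / |w|) * y ^ (1 - α))| ≤ (1:ℝ) ^ α * y ^ (1 - α) := by
          rw [Real.one_rpow, abs_mul, abs_neg, abs_div, abs_abs,
            div_self (ne_of_gt hwpos), abs_of_nonneg hyαpos.le, one_mul]
        have hH := h 1 y (-(w / |w|) * y ^ (1 - α)) zero_le_one hy0 hz
        rw [wz_key hw, hyα] at hH
        have hcan : |w| * ((u + 1) / |w|) = u + 1 := by field_simp
        rw [hcan, ← hv0] at hH
        linarith
      · set c : ℝ := (u / α) ^ α * (v / (1 - α)) ^ (1 - α) with hc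
        have hA : (0:ℝ) < (u / α) ^ α := Real.rpow_pos_of_pos (by positivity) _
        have hB : (0:ℝ) < (v / (1 - α)) ^ (1 - α) := Real.rpow_pos_of_pos (by positivity) _
        have hcpos : 0 < c := mul_pos hA hB
        have hxy : (α / u * c) ^ α * ((1 - α) / v * c) ^ (1 - α) = 1 := by
          rw [Real.mul_rpow (by positivity) hcpos.le,
            Real.mul_rpow (by positivity) hcpos.le]
          have h2 : (α / u) ^ α = ((u / α) ^ α)⁻¹ := by
            rw [← Real.inv_rpow (by positivity), inv_div]
          have h3 : ((1 - α) / v) ^ (1 - α) = ((v / (1 - α)) ^ (1 - α))⁻¹ := by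
            rw [← Real.inv_rpow (by positivity), inv_div]
          have h4 : c ^ α * c ^ (1 - α) = c := by
            rw [← Real.rpow_add hcpos]; simp
          rw [h2, h3]
          field_simp
          nlinarith [h4]
        have hz : |(-(w / |w|))| ≤ (α / u * c) ^ α * ((1 - α) / v * c) ^ (1 - α) := by
          rw [hxy, abs_neg, abs_div, abs_abs, div_self (ne_of_gt hwpos)]
        have hH := h (α / u * c) ((1 - α) / v * c) (-(w / |w|)) (by positivity)
          (by positivity) hz
        have hwz : w * (-(w / |w|)) = -|w| := by
          have := wz_key hw 1
          simpa using this
        rw [hwz] at hH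
        have hux : u * (α / u * c) = α * c := by field_simp
        have hvy : v * ((1 - α) / v * c) = (1 - α) * c := by field_simp
        rw [hux, hvy] at hH
        linarith
  · rintro ⟨hu, hv, hw⟩ x y z hx hy hz
    have h2 : (u * x / α) ^ α * (v * y / (1 - α)) ^ (1 - α) =
        ((u / α) ^ α * (v / (1 - α)) ^ (1 - α)) * (x ^ α * y ^ (1 - α)) := by
      rw [show u * x / α = (u / α) * x by ring, show v * y / (1 - α) = (v / (1 - α)) * y by ring,
        Real.mul_rpow (by positivity) hx, Real.mul_rpow (by positivity) hy]
      ring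
    have h3 : (u * x / α) ^ α * (v * y / (1 - α)) ^ (1 - α) ≤
        α * (u * x / α) + (1 - α) * (v * y / (1 - α)) :=
      Real.geom_mean_le_arith_mean2_weighted hα0.le h1α.le (by positivity) (by positivity)
        (by ring)
    have h4 : α * (u * x / α) + (1 - α) * (v * y / (1 - α)) = u * x + v * y := by
      field_simp
    have key : |w| * (x ^ α * y ^ (1 - α)) ≤ u * x + v * y := by
      have h1 : |w| * (x ^ α * y ^ (1 - α)) ≤
          ((u / α) ^ α * (v / (1 - α)) ^ (1 - α)) * (x ^ α * y ^ (1 - α)) :=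
        mul_le_mul_of_nonneg_right hw (by positivity)
      rw [← h2] at h1
      linarith
    nlinarith [neg_abs_le (w * z), abs_mul w z,
      mul_le_mul_of_nonneg_left hz (abs_nonneg w)]
end
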